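/- arXiv:1510.01748 — 3 statements merged into one kernel-verified Lean document; each statement's English description precedes it below -/
import Mathlib

section
/- Let k ≥ 1, m ≥ 1, let h₁,…,h_k : ℝ^m → ℝ be smooth with h_i(0) = 0, let U : ℝ^k → ℝ be smooth, and define H(p,q,p',q') := Σ_{i=1}^k p_i h_i(p') + U(q) on ℝ^{2k} × ℝ^{2m}. If γ(t) = (p(t), q(t), p'(t), q'(t)) is a solution of Hamilton's equations of the autonomous Hamiltonian H on an interval containing 0 and p'(0) = 0, then for every t in the interval: p'(t) = 0, q(t) = q(0) and p(t) = p(0) − t·∇U(q(0)). In particular |p(t) − p(0)| = |t|·|∇U(q(0))|, so if ∇U(q(0)) ≠ 0 the increment of the momentum |p(t) − p(0)| grows with linear speed (a superconductivity channel). -/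
open Real Set

noncomputable section

/-- `ℝ^k` as a function type; the Euclidean norm is `eucNorm`. -/
abbrev Vec (k : ℕ) := Fin k → ℝ

/-- The phase space `ℝ^{2k} = ℝ^k(p) × ℝ^k(q)`. -/
abbrev Phase (k : ℕ) := Vec k × Vec k

/-- The product phase space `ℝ^{2k} × ℝ^{2m}`, with coordinates `((p,q),(p',q'))`. -/
abbrev Phase2 (k m : ℕ) := Phase k × Phase m

/-- Euclidean norm on `ℝ^k`. -/
def eucNorm {k : ℕ} (x : Vec k) : ℝ := Real.sqrt (∑ i, x i ^ 2)

/-- The vector of partial derivatives of `f` at `x` (the gradient w.r.t. the Euclidean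
structure). -/
def gradVec {k : ℕ} (f : Vec k → ℝ) (x : Vec k) : Vec k :=
  fun i => fderiv ℝ f x (Pi.single i 1)

/-- `γ` solves Hamilton's equations `p' = -∂G/∂q`, `q' = ∂G/∂p`, `(p')' = -∂G/∂q'`,
`(q')' = ∂G/∂p'` of the time-dependent Hamiltonian `G` (for the symplectic form
`dp∧dq + dp'∧dq'`) at every time `t ∈ S`. -/
def IsHamSolOn2 {k m : ℕ} (G : Phase2 k m × ℝ → ℝ) (γ : ℝ → Phase2 k m) (S : Set ℝ) :
    Prop :=
  ∀ t ∈ S,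
    HasDerivAt (fun s => (γ s).1.1)
      (-(gradVec (fun q => G ((((γ t).1.1, q), (γ t).2), t)) (γ t).1.2)) t ∧
    HasDerivAt (fun s => (γ s).1.2)
      (gradVec (fun p => G (((p, (γ t).1.2), (γ t).2), t)) (γ t).1.1) t ∧
    HasDerivAt (fun s => (γ s).2.1)
      (-(gradVec (fun q' => G (((γ t).1, ((γ t).2.1, q')), t)) (γ t).2.2)) t ∧
    HasDerivAt (fun s => (γ s).2.2)
      (gradVec (fun p' => G (((γ t).1, (p', (γ t).2.2)), t)) (γ t).2.1) t

/-- `G` is complete: through every initial condition there is a solution of Hamilton's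
equations defined on all of `ℝ`. -/
def HamComplete2 {k m : ℕ} (G : Phase2 k m × ℝ → ℝ) : Prop :=
  ∀ (t₀ : ℝ) (x₀ : Phase2 k m), ∃ γ : ℝ → Phase2 k m, γ t₀ = x₀ ∧ IsHamSolOn2 G γ Set.univ

/-- The stabilization `X × Z ⊆ ℝ^{2k} × ℝ^{2m}` of a set `X ⊆ ℝ^{2k}`, where
`Z = {p' = 0}` is the lift of the zero section `𝕋^m ⊂ T*𝕋^m`. -/
def stab {k m : ℕ} (X : Set (Phase k)) : Set (Phase2 k m) :=
  {x | x.1 ∈ X ∧ x.2.1 = 0}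


lemma eucNorm_smul {k : ℕ} (a : ℝ) (x : Vec k) : eucNorm (a • x) = |a| * eucNorm x := by
  unfold eucNorm
  simp only [Pi.smul_apply, smul_eq_mul, mul_pow]
  rw [← Finset.mul_sum, Real.sqrt_mul (sq_nonneg a), Real.sqrt_sq_eq_abs]

lemma constOn {E : Type*} [NormedAddCommGroup E] [NormedSpace ℝ E] {f : ℝ → E} {s : Set ℝ}
    (hs : s.OrdConnected) (hf : ∀ t ∈ s, HasDerivAt f 0 t) {a b : ℝ}
    (ha : a ∈ s) (hb : b ∈ s) : f b = f a := by
  have hc : Convex ℝ s := convex_iff_ordConnected.2 hs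
  have := Convex.norm_image_sub_le_of_norm_hasDerivWithin_le (C := 0) (f' := fun _ => 0)
    (fun x hx => (hf x hx).hasDerivWithinAt) (fun x _ => by simp) hc ha hb
  simpa [sub_eq_zero] using this

lemma gradVec_const {k : ℕ} (c : ℝ) (x : Vec k) : gradVec (fun _ => c) x = 0 := by
  funext i; simp [gradVec]

lemma gradVec_const_add {k : ℕ} (c : ℝ) (U : Vec k → ℝ) (x : Vec k) :
    gradVec (fun q => c + U q) x = gradVec U x := by
  funext i; simp [gradVec, fderiv_const_add]

lemma gradVec_linear_add_const {k : ℕ} (c : Vec k) (d : ℝ) (x : Vec k) :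
    gradVec (fun p => (∑ j, p j * c j) + d) x = c := by
  funext i
  set L : Vec k →L[ℝ] ℝ := ∑ j, c j • (ContinuousLinearMap.proj j : Vec k →L[ℝ] ℝ) with hL
  have hLapp : ∀ p : Vec k, L p = ∑ j, p j * c j := by
    intro p; simp [hL, ContinuousLinearMap.sum_apply, mul_comm]
  have hfd : HasFDerivAt (fun p : Vec k => (∑ j, p j * c j) + d) L x := by
    have := (L.hasFDerivAt (x := x)).add_const d
    simp only [hLapp] at this
    exact this
  rw [gradVec, hfd.fderiv, hLapp]
  simp [Pi.single_apply]

/-- superconductivity channel of the flow of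
`H = Σ pᵢhᵢ(p') + U(q)`: along any solution of Hamilton's equations with `p'(0) = 0`
one has `p'(t) = 0`, `q(t) = q(0)` and `p(t) = p(0) - t·∇U(q(0))`; in particular
`|p(t) - p(0)| = |t|·|∇U(q(0))|` grows with linear speed. -/
theorem stmt_6 (k m : ℕ) (hk : 1 ≤ k) (hm : 1 ≤ m)
    (h : Fin k → Vec m → ℝ) (hh : ∀ i, ContDiff ℝ (⊤ : ℕ∞) (h i)) (hh0 : ∀ i, h i 0 = 0)
    (U : Vec k → ℝ) (hU : ContDiff ℝ (⊤ : ℕ∞) U)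
    (H : Phase2 k m → ℝ) (hH : H = fun x => (∑ i, x.1.1 i * h i x.2.1) + U x.1.2)
    (s : Set ℝ) (hs : s.OrdConnected) (h0s : (0 : ℝ) ∈ s)
    (γ : ℝ → Phase2 k m) (hγ : IsHamSolOn2 (fun z => H z.1) γ s)
    (hp'0 : (γ 0).2.1 = 0) :
    ∀ t ∈ s,
      (γ t).2.1 = 0 ∧
      (γ t).1.2 = (γ 0).1.2 ∧
      (γ t).1.1 = (γ 0).1.1 - t • gradVec U ((γ 0).1.2) ∧
      eucNorm ((γ t).1.1 - (γ 0).1.1) = |t| * eucNorm (gradVec U ((γ 0).1.2)) := by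
  subst hH
  -- Step 1: p' is constant (hence 0)
  have hp' : ∀ t ∈ s, (γ t).2.1 = 0 := by
    have hd : ∀ t ∈ s, HasDerivAt (fun u => (γ u).2.1) 0 t := by
      intro t ht
      have := (hγ t ht).2.2.1
      simpa [gradVec_const] using this
    intro t ht
    rw [constOn hs hd h0s ht]
    exact hp'0
  -- Step 2: q is constant
  have hq : ∀ t ∈ s, (γ t).1.2 = (γ 0).1.2 := by
    have hd : ∀ t ∈ s, HasDerivAt (fun u => (γ u).1.2) 0 t := by
      intro t ht
      have hder := (hγ t ht).2.1
      have hgrad : gradVec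
          (fun p => (∑ i, p i * h i (γ t).2.1) + U ((γ t).1.2)) (γ t).1.1 = 0 := by
        rw [gradVec_linear_add_const]
        funext i
        simp [hp' t ht, hh0 i]
      simpa [hgrad] using hder
    intro t ht
    exact constOn hs hd h0s ht
  set v : Vec k := gradVec U ((γ 0).1.2) with hv
  -- Step 3: p(t) = p(0) - t • v
  have hp : ∀ t ∈ s, (γ t).1.1 = (γ 0).1.1 - t • v := by
    have hd : ∀ t ∈ s, HasDerivAt (fun u => (γ u).1.1 + u • v) 0 t := by
      intro t ht
      have hder := (hγ t ht).1
      have hgrad : gradVec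
          (fun q => (∑ i, (γ t).1.1 i * h i (γ t).2.1) + U q) (γ t).1.2 = v := by
        rw [gradVec_const_add, hv, hq t ht]
      have h1 : HasDerivAt (fun u => (γ u).1.1) (-v) t := by
        rw [← hgrad]; exact hder
      have h2 : HasDerivAt (fun u : ℝ => u • v) v t := by
        simpa using (hasDerivAt_id t).smul_const v
      have h3 := h1.add h2
      rw [neg_add_cancel] at h3
      exact h3
    intro t ht
    have := constOn hs hd h0s ht
    simp only [zero_smul, add_zero] at this
    exact eq_sub_of_add_eq this
  intro t ht
  refine ⟨hp' t ht, hq t ht, hp t ht, ?_⟩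
  have : (γ t).1.1 - (γ 0).1.1 = (-t) • v := by
    rw [hp t ht]; funext i; simp [sub_eq_add_neg]
  rw [this, eucNorm_smul, abs_neg]
end
end

section
/- Let M be a smooth finite-dimensional manifold, v a smooth vector field on M, and X₀, X₁ ⊂ M two sets. Let F : M → ℝ be smooth with F ≤ 0 on X₀ and F ≥ 1 on X₁, and let γ be an integral curve of v defined on an interval [t₀, t₁] with t₀ < t₁, γ(t₀) ∈ X₀ and γ(t₁) ∈ X₁. Then there exists t ∈ [t₀, t₁] such that (L_vF)(γ(t)) ≥ 1/(t₁ − t₀). Consequently, every chord of v from X₀ to X₁ has time-length at least 1/L_max(X₀, X₁; v), where L_max(X₀, X₁; v) := inf { sup_M L_vF : F ∈ C_c^∞(M), F ≤ 0 on X₀, F ≥ 1 on X₁ } (provided L_max > 0). -/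
open Set
open scoped Manifold

noncomputable section

/-- The Lie derivative `(L_v F)(x) = dF_x(v(x))` of a function along a vector field. -/
def lieDeriv {E : Type*} [NormedAddCommGroup E] [NormedSpace ℝ E]
    {M : Type*} [TopologicalSpace M] [ChartedSpace E M]
    [IsManifold (modelWithCornersSelf ℝ E) (⊤ : ℕ∞) M]
    (v : (x : M) → TangentSpace (modelWithCornersSelf ℝ E) x) (F : M → ℝ) (x : M) : ℝ :=
  mfderiv (modelWithCornersSelf ℝ E) 𝓘(ℝ, ℝ) F x (v x)

/-- The old (2024) Mathlib `IsIntegralCurveOn` for manifolds (full `HasMFDerivAt`). -/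
def IsIntegralCurveOnOld {E : Type*} [NormedAddCommGroup E] [NormedSpace ℝ E]
    {H : Type*} [TopologicalSpace H] {I : ModelWithCorners ℝ E H}
    {M : Type*} [TopologicalSpace M] [ChartedSpace H M]
    (γ : ℝ → M) (v : (x : M) → TangentSpace I x) (s : Set ℝ) : Prop :=
  ∀ t ∈ s, HasMFDerivAt 𝓘(ℝ, ℝ) I γ t ((1 : ℝ →L[ℝ] ℝ).smulRight <| v (γ t))

/-- The quantity `L_max(X₀,X₁;v) = inf { sup_M L_v F }` over compactly supported smooth
`F` with `F ≤ 0` on `X₀` and `F ≥ 1` on `X₁`. -/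
def Lmax {E : Type*} [NormedAddCommGroup E] [NormedSpace ℝ E]
    {M : Type*} [TopologicalSpace M] [ChartedSpace E M]
    [IsManifold (modelWithCornersSelf ℝ E) (⊤ : ℕ∞) M]
    (X₀ X₁ : Set M) (v : (x : M) → TangentSpace (modelWithCornersSelf ℝ E) x) : ℝ :=
  sInf {c | ∃ F : M → ℝ, ContMDiff (modelWithCornersSelf ℝ E) 𝓘(ℝ, ℝ) (⊤ : ℕ∞) F ∧
    HasCompactSupport F ∧ (∀ x ∈ X₀, F x ≤ 0) ∧ (∀ x ∈ X₁, 1 ≤ F x) ∧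
    c = sSup (Set.range (lieDeriv v F))}

/-! The first claim is the mean value theorem for `F ∘ γ`, whose derivative is `L_v F ∘ γ` because
`γ` is an integral curve: the slope of `F ∘ γ` over `[t₀, t₁]` is at least `1 / (t₁ - t₀)`. The
second follows by taking the supremum over `M` and then the infimum over all admissible `F`; the
only care needed is with the junk values `sInf = 0` and `sSup = 0`, which `0 < L_max` rules out. -/

namespace Real

lemma pos_of_mem_of_sInf_pos {s : Set ℝ} {x : ℝ} (hs : 0 < sInf s) (hx : x ∈ s) : 0 < x := by
  by_contra! hx0
  exact (sInf_nonpos' ⟨x, hx, hx0⟩).not_gt hs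

lemma bddAbove_of_sSup_pos {s : Set ℝ} (hs : 0 < sSup s) : BddAbove s := by
  by_contra h
  exact (sSup_of_not_bddAbove h).not_gt hs

lemma nonempty_of_sInf_pos {s : Set ℝ} (hs : 0 < sInf s) : s.Nonempty := by
  by_contra h
  rw [Set.not_nonempty_iff_eq_empty.mp h, sInf_empty] at hs
  exact hs.false

end Real

section

variable {E : Type*} [NormedAddCommGroup E] [NormedSpace ℝ E]
  {M : Type*} [TopologicalSpace M] [ChartedSpace E M]
  [IsManifold (modelWithCornersSelf ℝ E) (⊤ : ℕ∞) M]
  {v : (x : M) → TangentSpace (modelWithCornersSelf ℝ E) x} {F : M → ℝ} {γ : ℝ → M}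

namespace IsIntegralCurveOnOld

lemma hasDerivAt_comp {s : Set ℝ} {t : ℝ} (hγ : IsIntegralCurveOnOld γ v s) (ht : t ∈ s)
    (hF : MDifferentiableAt (modelWithCornersSelf ℝ E) 𝓘(ℝ, ℝ) F (γ t)) :
    HasDerivAt (F ∘ γ) (lieDeriv v F (γ t)) t := by
  have hcomp := hasMFDerivAt_iff_hasFDerivAt.mp (hF.hasMFDerivAt.comp t (hγ t ht))
  convert HasFDerivAt.hasDerivAt (𝕜 := ℝ) (F := ℝ) hcomp using 1
  exact congrArg (mfderiv% F (γ t)) (one_smul ℝ (v (γ t))).symm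

lemma exists_lieDeriv_eq_slope {t₀ t₁ : ℝ} (hγ : IsIntegralCurveOnOld γ v (Icc t₀ t₁))
    (hF : MDifferentiable (modelWithCornersSelf ℝ E) 𝓘(ℝ, ℝ) F) (hlt : t₀ < t₁) :
    ∃ t ∈ Ioo t₀ t₁, lieDeriv v F (γ t) = (F (γ t₁) - F (γ t₀)) / (t₁ - t₀) :=
  exists_hasDerivAt_eq_slope (F ∘ γ) _ hlt
    (hF.continuous.comp_continuousOn fun t ht ↦ (hγ t ht).continuousAt.continuousWithinAt)
    fun _ ht ↦ hγ.hasDerivAt_comp (Ioo_subset_Icc_self ht) (hF _)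

lemma exists_one_div_le_lieDeriv {t₀ t₁ : ℝ} (hγ : IsIntegralCurveOnOld γ v (Icc t₀ t₁))
    (hF : MDifferentiable (modelWithCornersSelf ℝ E) 𝓘(ℝ, ℝ) F) (hlt : t₀ < t₁)
    (h₀ : F (γ t₀) ≤ 0) (h₁ : 1 ≤ F (γ t₁)) :
    ∃ t ∈ Icc t₀ t₁, 1 / (t₁ - t₀) ≤ lieDeriv v F (γ t) := by
  obtain ⟨t, ht, hslope⟩ := hγ.exists_lieDeriv_eq_slope hF hlt
  refine ⟨t, Ioo_subset_Icc_self ht, ?_⟩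
  rw [hslope]
  gcongr
  linarith

end IsIntegralCurveOnOld

lemma le_Lmax {X₀ X₁ : Set M} {a : ℝ} (hL : 0 < Lmax X₀ X₁ v)
    (h : ∀ F : M → ℝ, ContMDiff (modelWithCornersSelf ℝ E) 𝓘(ℝ, ℝ) (⊤ : ℕ∞) F →
      (∀ x ∈ X₀, F x ≤ 0) → (∀ x ∈ X₁, 1 ≤ F x) → ∃ x, a ≤ lieDeriv v F x) :
    a ≤ Lmax X₀ X₁ v := by
  refine le_csInf (Real.nonempty_of_sInf_pos hL) ?_
  rintro _ ⟨F, hF, hFc, hF₀, hF₁, rfl⟩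
  obtain ⟨x, hx⟩ := h F hF hF₀ hF₁
  have hsup : 0 < sSup (range (lieDeriv v F)) :=
    Real.pos_of_mem_of_sInf_pos hL ⟨F, hF, hFc, hF₀, hF₁, rfl⟩
  exact hx.trans (le_csSup (Real.bddAbove_of_sSup_pos hsup) (mem_range_self x))

end

theorem stmt_13_general {E : Type*} [NormedAddCommGroup E] [NormedSpace ℝ E]
    {M : Type*} [TopologicalSpace M] [ChartedSpace E M]
    [IsManifold (modelWithCornersSelf ℝ E) (⊤ : ℕ∞) M]
    (v : (x : M) → TangentSpace (modelWithCornersSelf ℝ E) x)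
    (X₀ X₁ : Set M) :
    (∀ (F : M → ℝ), ContMDiff (modelWithCornersSelf ℝ E) 𝓘(ℝ, ℝ) (⊤ : ℕ∞) F →
      (∀ x ∈ X₀, F x ≤ 0) → (∀ x ∈ X₁, 1 ≤ F x) →
      ∀ (t₀ t₁ : ℝ) (γ : ℝ → M), t₀ < t₁ → IsIntegralCurveOnOld γ v (Icc t₀ t₁) →
        γ t₀ ∈ X₀ → γ t₁ ∈ X₁ →
        ∃ t ∈ Icc t₀ t₁, 1 / (t₁ - t₀) ≤ lieDeriv v F (γ t)) ∧
    (0 < Lmax X₀ X₁ v →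
      ∀ (t₀ τ : ℝ) (γ : ℝ → M), 0 < τ → IsIntegralCurveOnOld γ v (Icc t₀ (t₀ + τ)) →
        γ t₀ ∈ X₀ → γ (t₀ + τ) ∈ X₁ → 1 / Lmax X₀ X₁ v ≤ τ) := by
  refine ⟨fun F hF hF₀ hF₁ _ _ _ hlt hγ h₀ h₁ ↦
    hγ.exists_one_div_le_lieDeriv (hF.mdifferentiable (by simp)) hlt (hF₀ _ h₀) (hF₁ _ h₁),
    fun hL t₀ τ γ hτ hγ h₀ h₁ ↦ (one_div_le hL hτ).mpr (le_Lmax hL fun F hF hF₀ hF₁ ↦ ?_)⟩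
  obtain ⟨t, -, ht⟩ := hγ.exists_one_div_le_lieDeriv (hF.mdifferentiable (by simp))
    (by linarith) (hF₀ _ h₀) (hF₁ _ h₁)
  exact ⟨γ t, by rwa [add_sub_cancel_left] at ht⟩

/-- the basic calculus bound: if `F ≤ 0` on `X₀`, `F ≥ 1` on `X₁` and
`γ` is an integral curve of `v` on `[t₀,t₁]` going from `X₀` to `X₁`, then
`L_v F ≥ 1/(t₁-t₀)` somewhere along the chord; consequently (when
`L_max(X₀,X₁;v) > 0`) every chord of `v` from `X₀` to `X₁` has time-length at least
`1/L_max(X₀,X₁;v)`. -/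
theorem stmt_13 {E : Type*} [NormedAddCommGroup E] [NormedSpace ℝ E]
    [FiniteDimensional ℝ E]
    {M : Type*} [TopologicalSpace M] [ChartedSpace E M]
    [IsManifold (modelWithCornersSelf ℝ E) (⊤ : ℕ∞) M]
    [T2Space M] [SecondCountableTopology M]
    (v : (x : M) → TangentSpace (modelWithCornersSelf ℝ E) x)
    (hv : ContMDiff (modelWithCornersSelf ℝ E) (modelWithCornersSelf ℝ E).tangent (⊤ : ℕ∞)
      (fun x => (⟨x, v x⟩ : TangentBundle (modelWithCornersSelf ℝ E) M)))
    (X₀ X₁ : Set M) :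
    (∀ (F : M → ℝ), ContMDiff (modelWithCornersSelf ℝ E) 𝓘(ℝ, ℝ) (⊤ : ℕ∞) F →
      (∀ x ∈ X₀, F x ≤ 0) → (∀ x ∈ X₁, 1 ≤ F x) →
      ∀ (t₀ t₁ : ℝ) (γ : ℝ → M), t₀ < t₁ → IsIntegralCurveOnOld γ v (Icc t₀ t₁) →
        γ t₀ ∈ X₀ → γ t₁ ∈ X₁ →
        ∃ t ∈ Icc t₀ t₁, 1 / (t₁ - t₀) ≤ lieDeriv v F (γ t)) ∧
    (0 < Lmax X₀ X₁ v →
      ∀ (t₀ τ : ℝ) (γ : ℝ → M), 0 < τ → IsIntegralCurveOnOld γ v (Icc t₀ (t₀ + τ)) →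
        γ t₀ ∈ X₀ → γ (t₀ + τ) ∈ X₁ → 1 / Lmax X₀ X₁ v ≤ τ) :=
  stmt_13_general v X₀ X₁
end
end

section
/- Let V be a finite-dimensional real vector space and ω : V × V → ℝ a nondegenerate alternating bilinear form. Let α, β ∈ V* be linear functionals and let X_α, X_β ∈ V be the unique vectors with ω(X_α, w) = α(w) and ω(X_β, w) = β(w) for all w ∈ V. Then the alternating bilinear form ω' defined by ω'(u, w) := ω(u, w) + α(u)β(w) − α(w)β(u) is nondegenerate if and only if 1 + ω(X_α, X_β) ≠ 0. (This is the pointwise linear-algebra content of the statement that the deformed form ω_τ = ω + τ·dF∧dG is symplectic precisely where 1 − τ{F,G} ≠ 0.) -/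
/-!
If `ω Xα = α` and `ω Xβ = β`, then `(ω + α ∧ β) u = ω (u + α u • Xβ - β u • Xα)`. As `ω` is
nondegenerate, `u` lies in the kernel of the deformed form exactly when
`u = β u • Xα - α u • Xβ`. Applying `α` and `β` to this equation (with `α Xα = β Xβ = 0` and
`α Xβ = -β Xα = ω Xα Xβ`) gives `(1 + ω Xα Xβ) α u = (1 + ω Xα Xβ) β u = 0`. Hence the kernel
is trivial when `1 + ω Xα Xβ ≠ 0`, and otherwise it contains `Xα ≠ 0`.
-/

namespace LinearMap

variable {K V : Type*} [Field K] [AddCommGroup V] [Module K V]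

/-- The wedge product `α ∧ β`. -/
def dualWedge (α β : V →ₗ[K] K) : V →ₗ[K] V →ₗ[K] K :=
  α.smulRight β - β.smulRight α

variable {ω : V →ₗ[K] V →ₗ[K] K} {α β : V →ₗ[K] K} {Xα Xβ : V}

@[simp]
theorem dualWedge_apply (u w : V) : dualWedge α β u w = α u * β w - α w * β u := by
  simp [dualWedge, mul_comm]

theorem add_dualWedge_apply_eq (hXα : ω Xα = α) (hXβ : ω Xβ = β) (u : V) :
    (ω + dualWedge α β) u = ω (u + α u • Xβ - β u • Xα) := by
  ext w
  simp only [add_apply, dualWedge_apply, map_sub, map_add, map_smul, sub_apply, smul_apply,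
    smul_eq_mul, hXα, hXβ]
  ring

theorem not_separatingLeft_add_dualWedge (hω : ω.IsAlt) (hXα : ω Xα = α) (hXβ : ω Xβ = β)
    (h : 1 + ω Xα Xβ = 0) : ¬ (ω + dualWedge α β).SeparatingLeft := by
  have hαXα : α Xα = 0 := hXα ▸ hω Xα
  have hβXα : β Xα = 1 := by rw [← hXβ, ← hω.neg]; linear_combination -h
  have hXα_ne : Xα ≠ 0 := by
    rintro rfl
    simp at h
  refine fun hsep ↦ hXα_ne (hsep Xα fun w ↦ ?_)
  simp [add_dualWedge_apply_eq hXα hXβ, hαXα, hβXα]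

theorem separatingLeft_add_dualWedge (hω : ω.IsAlt) (hnd : ω.SeparatingLeft)
    (hXα : ω Xα = α) (hXβ : ω Xβ = β) (h : 1 + ω Xα Xβ ≠ 0) :
    (ω + dualWedge α β).SeparatingLeft := by
  intro u hu
  have hker : u + α u • Xβ - β u • Xα = 0 :=
    hnd _ fun w ↦ by rw [← add_dualWedge_apply_eq hXα hXβ]; exact hu w
  have hαXα : α Xα = 0 := hXα ▸ hω Xα
  have hβXβ : β Xβ = 0 := hXβ ▸ hω Xβ
  have hαXβ : α Xβ = ω Xα Xβ := by rw [← hXα]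
  have hβXα : β Xα = -ω Xα Xβ := by rw [← hXβ, ← hω.neg]
  have hαu : α u = 0 := by
    have := congrArg α hker
    simp only [map_sub, map_add, map_smul, smul_eq_mul, map_zero, hαXα, hαXβ] at this
    exact (mul_eq_zero_iff_right h).mp (by linear_combination this)
  have hβu : β u = 0 := by
    have := congrArg β hker
    simp only [map_sub, map_add, map_smul, smul_eq_mul, map_zero, hβXβ, hβXα] at this
    exact (mul_eq_zero_iff_right h).mp (by linear_combination this)
  simpa [hαu, hβu] using hker

theorem separatingLeft_add_dualWedge_iff (hω : ω.IsAlt) (hnd : ω.SeparatingLeft)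
    (hXα : ω Xα = α) (hXβ : ω Xβ = β) :
    (ω + dualWedge α β).SeparatingLeft ↔ 1 + ω Xα Xβ ≠ 0 :=
  ⟨fun hsep h ↦ not_separatingLeft_add_dualWedge hω hXα hXβ h hsep,
    separatingLeft_add_dualWedge hω hnd hXα hXβ⟩

end LinearMap

theorem stmt_15_general (V : Type*) [AddCommGroup V] [Module ℝ V]
    (ω : V →ₗ[ℝ] V →ₗ[ℝ] ℝ)
    (halt : ∀ u : V, ω u u = 0)
    (hnondeg : ∀ u : V, (∀ w : V, ω u w = 0) → u = 0)
    (α β : V →ₗ[ℝ] ℝ) (Xα Xβ : V)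
    (hXα : ∀ w : V, ω Xα w = α w) (hXβ : ∀ w : V, ω Xβ w = β w) :
    (∀ u : V, (∀ w : V, ω u w + α u * β w - α w * β u = 0) → u = 0) ↔
      1 + ω Xα Xβ ≠ 0 := by
  have key := LinearMap.separatingLeft_add_dualWedge_iff halt hnondeg
    (LinearMap.ext hXα) (LinearMap.ext hXβ)
  simpa only [LinearMap.SeparatingLeft, LinearMap.add_apply, LinearMap.dualWedge_apply,
    add_sub_assoc] using key

/-- pointwise linear algebra behind the deformation `ω_τ = ω + τ·dF∧dG`:
for a nondegenerate alternating bilinear form `ω` on a finite-dimensional real vector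
space and linear functionals `α, β` with symplectically dual vectors `X_α, X_β`, the
deformed alternating form `ω'(u,w) = ω(u,w) + α(u)β(w) − α(w)β(u)` is nondegenerate if
and only if `1 + ω(X_α, X_β) ≠ 0`. -/
theorem stmt_15 (V : Type*) [AddCommGroup V] [Module ℝ V] [FiniteDimensional ℝ V]
    (ω : V →ₗ[ℝ] V →ₗ[ℝ] ℝ)
    (halt : ∀ u : V, ω u u = 0)
    (hnondeg : ∀ u : V, (∀ w : V, ω u w = 0) → u = 0)
    (α β : V →ₗ[ℝ] ℝ) (Xα Xβ : V)
    (hXα : ∀ w : V, ω Xα w = α w) (hXβ : ∀ w : V, ω Xβ w = β w) :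
    (∀ u : V, (∀ w : V, ω u w + α u * β w - α w * β u = 0) → u = 0) ↔
      1 + ω Xα Xβ ≠ 0 :=
  stmt_15_general V ω halt hnondeg α β Xα Xβ hXα hXβ
end
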